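/- arXiv:1601.04859 — 2 statements merged into one kernel-verified Lean document; each statement's English description precedes it below -/
import Mathlib

section
/- Let α, β be positive integers and let σ be the block-shift permutation of Z2^{2α+8β}. Then the Gray map Φ intertwines the (1+u,1+uv)-constacyclic shift with σ: for every w ∈ R1^α × R2^β, Φ(τ(w)) = σ(Φ(w)). -/
open TrivSqZeroExt Finset

set_option synthInstance.maxHeartbeats 1000000
set_option maxHeartbeats 2000000

noncomputable section

/-- `Z2` is the field with two elements. -/
abbrev Z2 := ZMod 2

/-- `R1 = Z2[u] = Z2 + uZ2` with `u² = 0`. -/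
abbrev R1 := DualNumber Z2

/-- `R2 = Z2[u,v] = Z2 + uZ2 + vZ2 + uvZ2` with `u² = v² = 0`, `uv = vu`,
realized as dual numbers over `R1`. -/
abbrev R2 := DualNumber R1

/-- The element `u` of `R1`. -/
def u1 : R1 := DualNumber.eps

/-- The inclusion of `Z2` into `R1`. -/
def ofZ2R1 (a : Z2) : R1 := TrivSqZeroExt.inl a

/-- The element `u` of `R2`. -/
def uu : R2 := TrivSqZeroExt.inl DualNumber.eps

/-- The element `v` of `R2`. -/
def vv : R2 := DualNumber.eps

/-- The inclusion of `Z2` into `R2`. -/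
def ofZ2R2 (a : Z2) : R2 := TrivSqZeroExt.inl (TrivSqZeroExt.inl a)

/-- `η : R2 → R1`, `a + ub + vc + uvd ↦ a + ub` (reduction modulo `v`),
as a ring homomorphism. -/
def eta : R2 →+* R1 where
  toFun := TrivSqZeroExt.fst
  map_one' := rfl
  map_mul' := TrivSqZeroExt.fst_mul
  map_zero' := rfl
  map_add' := TrivSqZeroExt.fst_add

/-- The ambient space `R1^α × R2^β`. -/
abbrev V (α β : ℕ) := (Fin α → R1) × (Fin β → R2)

/-- The scalar multiplication of `R2` on `R1^α × R2^β`: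
`l • (a₀,…,a_{α-1},b₀,…,b_{β-1}) = (η(l)a₀,…,η(l)a_{α-1}, lb₀,…,lb_{β-1})`. -/
instance instSMulV (α β : ℕ) : SMul R2 (V α β) :=
  ⟨fun l w => (fun i => eta l * w.1 i, fun j => l * w.2 j)⟩

lemma smulV_def {α β : ℕ} (l : R2) (w : V α β) :
    l • w = (fun i => eta l * w.1 i, fun j => l * w.2 j) := rfl

instance instMulActionV (α β : ℕ) : MulAction R2 (V α β) where
  one_smul w := by
    refine Prod.ext (funext fun i => ?_) (funext fun j => ?_)
    · show eta 1 * w.1 i = w.1 i; simp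
    · show (1 : R2) * w.2 j = w.2 j; simp
  mul_smul l l' w := by
    refine Prod.ext (funext fun i => ?_) (funext fun j => ?_)
    · show eta (l * l') * w.1 i = eta l * (eta l' * w.1 i); rw [map_mul, mul_assoc]
    · show l * l' * w.2 j = l * (l' * w.2 j); rw [mul_assoc]

instance instDistribMulActionV (α β : ℕ) : DistribMulAction R2 (V α β) where
  smul_zero l := by
    refine Prod.ext (funext fun i => ?_) (funext fun j => ?_)
    · show eta l * (0 : R1) = 0; simp
    · show l * (0 : R2) = 0; simp
  smul_add l w w' := by
    refine Prod.ext (funext fun i => ?_) (funext fun j => ?_)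
    · show eta l * (w.1 i + w'.1 i) = eta l * w.1 i + eta l * w'.1 i; rw [mul_add]
    · show l * (w.2 j + w'.2 j) = l * w.2 j + l * w'.2 j; rw [mul_add]

/-- `R1^α × R2^β` is an `R2`-module; a `Z2[u]Z2[u,v]`-additive code is an
`R2`-submodule of this module. -/
instance instModuleV (α β : ℕ) : Module R2 (V α β) where
  add_smul l l' w := by
    refine Prod.ext (funext fun i => ?_) (funext fun j => ?_)
    · show eta (l + l') * w.1 i = eta l * w.1 i + eta l' * w.1 i
      rw [map_add, add_mul]
    · show (l + l') * w.2 j = l * w.2 j + l' * w.2 j; rw [add_mul]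
  zero_smul w := by
    refine Prod.ext (funext fun i => ?_) (funext fun j => ?_)
    · show eta 0 * w.1 i = 0; simp
    · show (0 : R2) * w.2 j = 0; simp

/-- The cyclic shift `S` on `R1^α × R2^β`. -/
def shiftS {α β : ℕ} [NeZero α] [NeZero β] (w : V α β) : V α β :=
  (fun i => w.1 (i - 1), fun j => w.2 (j - 1))

/-- The `(1+u, 1+uv)`-constacyclic shift `τ` on `R1^α × R2^β`. -/
def tau {α β : ℕ} [NeZero α] [NeZero β] (w : V α β) : V α β :=
  (fun i => (if i = 0 then 1 + u1 else 1) * w.1 (i - 1),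
   fun j => (if j = 0 then 1 + uu * vv else 1) * w.2 (j - 1))

/-- The inner product on `R1^α × R2^β`:
`⟨x,y⟩ = uv·ι(Σᵢ xᵢyᵢ) + Σⱼ x_{α+j} y_{α+j}` where `ι : R1 → R2` is the
natural inclusion. -/
def innerP {α β : ℕ} (x y : V α β) : R2 :=
  uu * vv * TrivSqZeroExt.inl (∑ i, x.1 i * y.1 i) + ∑ j, x.2 j * y.2 j

/-- The additive dual of a code `C ⊆ R1^α × R2^β`. -/
def dualSet {α β : ℕ} (C : Set (V α β)) : Set (V α β) :=
  {y | ∀ x ∈ C, innerP x y = 0}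

instance doubleNeZero (α : ℕ) [NeZero α] : NeZero (α + α) :=
  ⟨by have := NeZero.ne α; omega⟩

/-- The image space of the Gray map: `Z2^{2α+8β}`, grouped as a block of
`2α` coordinates followed by four blocks of `2β` coordinates. -/
abbrev W (α β : ℕ) :=
  (Fin (α + α) → Z2) × (Fin (β + β) → Z2) × (Fin (β + β) → Z2) ×
    (Fin (β + β) → Z2) × (Fin (β + β) → Z2)

/-- Cyclic shift by one position of a tuple. -/
def cyc {n : ℕ} [NeZero n] {A : Type*} (f : Fin n → A) : Fin n → A :=
  fun i => f (i - 1)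

/-- The block-shift permutation `σ` of `Z2^{2α+8β}`: the block of `2α`
coordinates and each of the four blocks of `2β` coordinates are cyclically
shifted by one position. -/
def sigmaW {α β : ℕ} [NeZero α] [NeZero β] (w : W α β) : W α β :=
  (cyc w.1, cyc w.2.1, cyc w.2.2.1, cyc w.2.2.2.1, cyc w.2.2.2.2)

/-- The Gray map `Φ : R1^α × R2^β → Z2^{2α+8β}`. -/
def Phi {α β : ℕ} (w : V α β) : W α β :=
  let r : Fin α → Z2 := fun i => (w.1 i).fst
  let q : Fin α → Z2 := fun i => (w.1 i).snd
  let a : Fin β → Z2 := fun j => (w.2 j).fst.fst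
  let b : Fin β → Z2 := fun j => (w.2 j).fst.snd
  let c : Fin β → Z2 := fun j => (w.2 j).snd.fst
  let d : Fin β → Z2 := fun j => (w.2 j).snd.snd
  (Fin.append q (fun i => q i + r i),
   Fin.append d (fun j => a j + d j),
   Fin.append (fun j => b j + d j) (fun j => a j + b j + d j),
   Fin.append (fun j => c j + d j) (fun j => a j + c j + d j),
   Fin.append (fun j => b j + c j + d j) (fun j => a j + b j + c j + d j))

/-- Lee weight on `R1`: `w_L(r + uq) = w_H(q, q + r)`. -/
def leeR1 (x : R1) : ℕ :=
  (if x.snd ≠ 0 then 1 else 0) + (if x.snd + x.fst ≠ 0 then 1 else 0)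

/-- Lee weight on `R2`:
`w_L(a+ub+vc+uvd) = w_H(d, a+d, b+d, a+b+d, c+d, a+c+d, b+c+d, a+b+c+d)`. -/
def leeR2 (y : R2) : ℕ :=
  let a := y.fst.fst; let b := y.fst.snd; let c := y.snd.fst; let d := y.snd.snd
  (if d ≠ 0 then 1 else 0) + (if a + d ≠ 0 then 1 else 0) +
  (if b + d ≠ 0 then 1 else 0) + (if a + b + d ≠ 0 then 1 else 0) +
  (if c + d ≠ 0 then 1 else 0) + (if a + c + d ≠ 0 then 1 else 0) +
  (if b + c + d ≠ 0 then 1 else 0) + (if a + b + c + d ≠ 0 then 1 else 0)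

/-- Lee weight on `R1^α × R2^β`: the sum of the Lee weights of the
coordinates. -/
def leeWt {α β : ℕ} (w : V α β) : ℕ :=
  ∑ i, leeR1 (w.1 i) + ∑ j, leeR2 (w.2 j)

/-- Hamming weight on `Z2^{2α+8β}`. -/
def wtW {α β : ℕ} (w : W α β) : ℕ :=
  hammingNorm w.1 + hammingNorm w.2.1 + hammingNorm w.2.2.1 +
    hammingNorm w.2.2.2.1 + hammingNorm w.2.2.2.2

/-- Hamming distance on `Z2^{2α+8β}`. -/
def distW {α β : ℕ} (w w' : W α β) : ℕ :=
  hammingDist w.1 w'.1 + hammingDist w.2.1 w'.2.1 + hammingDist w.2.2.1 w'.2.2.1 +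
    hammingDist w.2.2.2.1 w'.2.2.2.1 + hammingDist w.2.2.2.2 w'.2.2.2.2



lemma sub_one_val {m : ℕ} [NeZero m] (k : Fin m) :
    (k - 1).val = if k.val = 0 then m - 1 else k.val - 1 := by
  have hm : 0 < m := Nat.pos_of_ne_zero (NeZero.ne m)
  rw [Fin.sub_def]
  have h1v : (1 : Fin m).val = 1 % m := Fin.val_one' m
  rw [h1v]
  have hk := k.isLt
  rcases Nat.lt_or_ge 1 m with h1 | h1
  · rw [Nat.mod_eq_of_lt h1]
    by_cases h : k.val = 0
    · simp [h, Nat.mod_eq_of_lt (by omega : m - 1 < m)]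
    · simp only [h, if_false]
      have : m - 1 + k.val = m + (k.val - 1) := by omega
      rw [this, Nat.add_mod_left, Nat.mod_eq_of_lt (by omega)]
  · have hm1 : m = 1 := by omega
    subst hm1
    simp

lemma append_eval {n : ℕ} {A : Type*} (h1 h2 : Fin n → A) (k : Fin (n + n)) :
    Fin.append h1 h2 k =
      if h : k.val < n then h1 ⟨k.val, h⟩ else h2 ⟨k.val - n, by have := k.isLt; omega⟩ := by
  by_cases h : k.val < n
  · rw [dif_pos h]
    have hk : k = Fin.castAdd n ⟨k.val, h⟩ := Fin.ext rfl
    conv_lhs => rw [hk]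
    rw [Fin.append_left]
  · rw [dif_neg h]
    have hlt := k.isLt
    have hk : k = Fin.natAdd n ⟨k.val - n, by omega⟩ := Fin.ext (by simp; omega)
    conv_lhs => rw [hk]
    rw [Fin.append_right]

lemma cyc_append {n : ℕ} [NeZero n] {A : Type*} (f g f' g' : Fin n → A)
    (hf : ∀ i : Fin n, f' i = if i = 0 then g (i - 1) else f (i - 1))
    (hg : ∀ i : Fin n, g' i = if i = 0 then f (i - 1) else g (i - 1)) :
    Fin.append f' g' = cyc (Fin.append f g) := by
  have hn : 0 < n := Nat.pos_of_ne_zero (NeZero.ne n)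
  funext k
  have hk := k.isLt
  have hsub := sub_one_val k
  show Fin.append f' g' k = Fin.append f g (k - 1)
  rw [append_eval, append_eval]
  simp only [hf, hg]
  by_cases h0 : (k : ℕ) = 0 <;> simp only [h0, if_true, if_false] at hsub <;>
    split_ifs <;>
    simp only [Fin.ext_iff, Fin.val_zero, Fin.val_mk] at * <;>
    first
      | omega
      | (congr 1
         apply Fin.ext
         rw [sub_one_val]
         simp only [Fin.val_mk]
         split_ifs <;> omega)

lemma fst1 (x : R1) : ((1 + u1) * x).fst = x.fst := by
  simp [u1, fst_mul]

lemma snd1 (x : R1) : ((1 + u1) * x).snd = x.snd + x.fst := by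
  simp [u1, snd_mul, smul_eq_mul, add_comm]

lemma fstfst2 (y : R2) : ((1 + uu * vv) * y).fst.fst = y.fst.fst := by
  simp [uu, vv, fst_mul, snd_mul, smul_eq_mul]

lemma fstsnd2 (y : R2) : ((1 + uu * vv) * y).fst.snd = y.fst.snd := by
  simp [uu, vv, fst_mul, snd_mul, smul_eq_mul]

lemma sndfst2 (y : R2) : ((1 + uu * vv) * y).snd.fst = y.snd.fst := by
  simp [uu, vv, fst_mul, snd_mul, smul_eq_mul]

lemma sndsnd2 (y : R2) : ((1 + uu * vv) * y).snd.snd = y.snd.snd + y.fst.fst := by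
  simp [uu, vv, fst_mul, snd_mul, smul_eq_mul, add_comm]

/-- The Gray map `Φ` intertwines the `(1+u,1+uv)`-constacyclic
shift `τ` with the block-shift permutation `σ`: `Φ(τ(w)) = σ(Φ(w))`. -/
theorem gray_map_intertwines_constacyclic_shift (α β : ℕ) [NeZero α] [NeZero β]
    (w : V α β) : Phi (tau w) = sigmaW (Phi w) := by
  simp only [Phi, tau, sigmaW]
  refine Prod.ext ?_ (Prod.ext ?_ (Prod.ext ?_ (Prod.ext ?_ ?_))) <;>
    dsimp only <;>
    refine cyc_append _ _ _ _ (fun i => ?_) (fun i => ?_) <;>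
    by_cases h : i = 0 <;>
    simp [h, u1, uu, vv, fst1, snd1, fstfst2, fstsnd2, sndfst2, sndsnd2] <;>
    first
      | rfl
      | (ring_nf; try simp [show (2 : Z2) = 0 by decide])

end
end

section
/- Let α, β be positive integers and let C be a Z2[u]Z2[u,v]-additive cyclic code in R1^α × R2^β (i.e., S(C) = C). Then the additive dual code C⊥ is also cyclic: S(C⊥) = C⊥. -/
open TrivSqZeroExt Finset

set_option synthInstance.maxHeartbeats 1000000
set_option maxHeartbeats 2000000

noncomputable section

/-- Inverse of the cyclic shift. -/
def shiftT {α β : ℕ} [NeZero α] [NeZero β] (w : V α β) : V α β :=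
  (fun i => w.1 (i + 1), fun j => w.2 (j + 1))

lemma shiftS_shiftT {α β : ℕ} [NeZero α] [NeZero β] (w : V α β) :
    shiftS (shiftT w) = w := by
  refine Prod.ext (funext fun i => ?_) (funext fun j => ?_) <;>
    simp [shiftS, shiftT]

lemma innerP_shift {α β : ℕ} [NeZero α] [NeZero β] (x y : V α β) :
    innerP (shiftS x) (shiftS y) = innerP x y := by
  unfold innerP shiftS
  congr 1
  · congr 2
    exact Fintype.sum_equiv (Equiv.subRight (1 : Fin α)) _ _ (fun i => rfl)
  · exact Fintype.sum_equiv (Equiv.subRight (1 : Fin β)) _ _ (fun j => rfl)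

/-- If `C` is a `Z2[u]Z2[u,v]`-additive cyclic code then its
additive dual `C⊥` is also cyclic. -/
theorem dual_of_additive_cyclic_is_cyclic (α β : ℕ) [NeZero α] [NeZero β]
    (C : Submodule R2 (V α β)) (hC : shiftS '' (C : Set (V α β)) = (C : Set (V α β))) :
    shiftS '' dualSet (C : Set (V α β)) = dualSet (C : Set (V α β)) := by
  ext y
  constructor
  · rintro ⟨y', hy', rfl⟩ x hx
    rw [← hC] at hx
    obtain ⟨x', hx', rfl⟩ := hx
    rw [innerP_shift]
    exact hy' x' hx'
  · intro hy
    refine ⟨shiftT y, fun x hx => ?_, shiftS_shiftT y⟩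
    have hSx : shiftS x ∈ (C : Set (V α β)) := by
      rw [← hC]; exact ⟨x, hx, rfl⟩
    have := hy (shiftS x) hSx
    rwa [← shiftS_shiftT y, innerP_shift] at this

end
end
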